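/- Let N ≥ 2 be square-free with fundamental unit ε_N of norm 1, and let κ₁, κ₂ ≥ 2 be the square-free integers such that √(κ₁ε_N) and √(κ₂ε_N) lie in ℚ(√N). Then N, κ₁, κ₂ are pairwise distinct, and κ₁κ₂ = gcd(κ₁,κ₂)²·N. -/

import Mathlib

/-!
Writing `√(κ ε) = (A + B √N) / 2` and comparing rational and irrational parts gives
`A² + N B² = 2κt` and `AB = κu`; together with `t² - N u² = 4` this forces `A² = κ (t ± 2)`.
If both `κᵢ` used the same sign, `κ₁ κ₂` would be a square, so `κ₁ = κ₂`. Hence the signs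
differ and `κ₁ κ₂ N u² = κ₁ (t + 2) · κ₂ (t - 2)` is a square; for square-free `κ₁, κ₂, N`
comparing `p`-adic valuations yields `κ₁ κ₂ = gcd(κ₁, κ₂)² N`.
-/

namespace Nat

theorem mul_eq_gcd_sq_mul_of_isSquare {a b c : ℕ} (ha : Squarefree a) (hb : Squarefree b)
    (hc : Squarefree c) (h : IsSquare (a * b * c)) : a * b = gcd a b ^ 2 * c := by
  obtain ⟨r, hr⟩ := h
  have hr0 : r ≠ 0 := by rintro rfl; simp [ha.ne_zero, hb.ne_zero, hc.ne_zero] at hr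
  have hg0 : gcd a b ≠ 0 := gcd_ne_zero_left ha.ne_zero
  refine eq_of_factorization_eq (mul_ne_zero ha.ne_zero hb.ne_zero)
    (mul_ne_zero (pow_ne_zero _ hg0) hc.ne_zero) fun p => ?_
  have hval := congrArg (fun n => n.factorization p) hr
  simp only [factorization_mul (mul_ne_zero ha.ne_zero hb.ne_zero) hc.ne_zero,
    factorization_mul ha.ne_zero hb.ne_zero, factorization_mul hr0 hr0,
    Finsupp.add_apply] at hval
  rw [factorization_mul ha.ne_zero hb.ne_zero, factorization_mul (pow_ne_zero _ hg0) hc.ne_zero,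
    factorization_pow, factorization_gcd ha.ne_zero hb.ne_zero]
  simp only [Finsupp.add_apply, Finsupp.smul_apply, Finsupp.inf_apply, smul_eq_mul]
  have := ha.natFactorization_le_one p
  have := hb.natFactorization_le_one p
  have := hc.natFactorization_le_one p
  omega

theorem eq_of_isSquare_mul {a b : ℕ} (ha : Squarefree a) (hb : Squarefree b)
    (h : IsSquare (a * b)) : a = b := by
  have hab := mul_eq_gcd_sq_mul_of_isSquare ha hb squarefree_one (by simpa using h)
  have hga : gcd a b ≤ a := le_of_dvd (pos_of_ne_zero ha.ne_zero) (gcd_dvd_left a b)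
  have hgb : gcd a b ≤ b := le_of_dvd (pos_of_ne_zero hb.ne_zero) (gcd_dvd_right a b)
  have := pos_of_ne_zero ha.ne_zero
  have := pos_of_ne_zero hb.ne_zero
  nlinarith

theorem ne_of_mul_eq_gcd_sq_mul {a b c : ℕ} (hb : Squarefree b) (hb1 : b ≠ 1) (hc : c ≠ 0)
    (h : a * b = gcd a b ^ 2 * c) : a ≠ c := by
  rintro rfl
  have hsq : b = gcd a b * gcd a b := by
    rw [← sq]; exact Nat.eq_of_mul_eq_mul_left (pos_of_ne_zero hc) (h.trans (mul_comm _ _))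
  have : gcd a b = 1 := Nat.isUnit_iff.mp (hb _ (hsq ▸ dvd_refl _))
  exact hb1 (by rw [hsq, this])

end Nat

theorem Int.isSquare_of_isSquare_mul_sq {x v : ℤ} (hv : v ≠ 0) (h : IsSquare (x * v ^ 2)) :
    IsSquare x := by
  obtain ⟨r, hr⟩ := h
  rw [← Rat.isSquare_intCast_iff]
  exact ⟨r / v, by field_simp; exact_mod_cast hr.trans (sq r).symm⟩

theorem Int.isSquare_mul_of_isSquare_mul_of_isSquare_mul {a b v : ℤ} (hv : v ≠ 0)
    (ha : IsSquare (a * v)) (hb : IsSquare (b * v)) : IsSquare (a * b) :=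
  Int.isSquare_of_isSquare_mul_sq hv (by simpa only [mul_mul_mul_comm, ← sq] using ha.mul hb)

theorem Int.isSquare_mul_mul_of_sq_sub_mul_sq_eq_four {N : ℕ} {t u a b : ℤ} (hu : u ≠ 0)
    (hnorm : t ^ 2 - N * u ^ 2 = 4) (ha : IsSquare (a * (t + 2))) (hb : IsSquare (b * (t - 2))) :
    IsSquare (a * b * N) := by
  refine Int.isSquare_of_isSquare_mul_sq hu ?_
  rw [show a * b * N * u ^ 2 = a * (t + 2) * (b * (t - 2)) by linear_combination (-a * b) * hnorm]
  exact ha.mul hb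

theorem irrational_sqrt_natCast_of_squarefree {N : ℕ} (hsf : Squarefree N) (hN : N ≠ 1) :
    Irrational √N :=
  irrational_sqrt_natCast_iff.mpr fun ⟨k, hk⟩ =>
    hN (by rw [hk, Nat.isUnit_iff.mp (hsf k ⟨1, by rw [hk, mul_one]⟩)])

theorem Irrational.eq_zero_of_ratCast_add_mul_eq_zero {x : ℝ} (hx : Irrational x) {p q : ℚ}
    (h : (p : ℝ) + q * x = 0) : p = 0 ∧ q = 0 := by
  have hq : q = 0 := by
    by_contra hq
    exact not_irrational_zero (h ▸ (hx.ratCast_mul hq).ratCast_add p)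
  refine ⟨?_, hq⟩
  simpa [hq] using h

theorem sq_eq_mul_add_two_or_sub_two {K : Type*} [Field K] [NeZero (2 : K)] {d t u κ A B : K}
    (hnorm : t ^ 2 - d * u ^ 2 = 4) (hsum : A ^ 2 + d * B ^ 2 = 2 * κ * t)
    (hprod : A * B = κ * u) : A ^ 2 = κ * (t + 2) ∨ A ^ 2 = κ * (t - 2) := by
  -- `(A² - d B²)² = (A² + d B²)² - 4 d (AB)² = 4 κ² (t² - d u²) = 16 κ²`
  have hfactor : (2 * (A ^ 2 - κ * (t - 2))) * (2 * (A ^ 2 - κ * (t + 2))) = 0 := by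
    linear_combination 4 * A ^ 2 * hsum - 4 * d * (A * B + κ * u) * hprod + 4 * κ ^ 2 * hnorm
  rcases mul_eq_zero.mp hfactor with h | h <;>
    simp only [mul_eq_zero, two_ne_zero, false_or, sub_eq_zero] at h <;> simp [h]

theorem isSquare_mul_add_two_or_sub_two {N : ℕ} (hirr : Irrational √N) {t u κ : ℤ}
    (hnorm : t ^ 2 - N * u ^ 2 = 4)
    (h : ∃ a b : ℚ, ((a : ℝ) + b * √N) ^ 2 = κ * ((t + u * √N) / 2)) :
    IsSquare (κ * (t + 2)) ∨ IsSquare (κ * (t - 2)) := by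
  obtain ⟨a, b, hab⟩ := h
  obtain ⟨hrat, hirrat⟩ := hirr.eq_zero_of_ratCast_add_mul_eq_zero
    (p := a ^ 2 + N * b ^ 2 - κ * t / 2) (q := 2 * a * b - κ * u / 2) (by
      push_cast
      linear_combination hab - (b : ℝ) ^ 2 * Real.sq_sqrt (Nat.cast_nonneg N))
  have hsum : (2 * a) ^ 2 + N * (2 * b) ^ 2 = 2 * κ * t := by linear_combination 4 * hrat
  have hprod : (2 * a) * (2 * b) = (κ : ℚ) * u := by linear_combination 2 * hirrat
  simp_rw [← Rat.isSquare_intCast_iff]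
  rcases sq_eq_mul_add_two_or_sub_two (by exact_mod_cast hnorm) hsum hprod with h | h
  · exact .inl ⟨2 * a, by push_cast; rw [← h, sq]⟩
  · exact .inr ⟨2 * a, by push_cast; rw [← h, sq]⟩

theorem stmt_10_general (N : ℕ) (hN : 2 ≤ N) (hsf : Squarefree N) (t u : ℤ)
    (hu : 0 < u)
    (hnorm : t ^ 2 - (N : ℤ) * u ^ 2 = 4)
    (κ₁ κ₂ : ℤ) (hκ₁ : 2 ≤ κ₁) (hκ₂ : 2 ≤ κ₂)
    (hsf₁ : Squarefree κ₁) (hsf₂ : Squarefree κ₂) (hne : κ₁ ≠ κ₂)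
    (h₁ : ∃ a b : ℚ, ((a : ℝ) + (b : ℝ) * Real.sqrt N) ^ 2 =
      (κ₁ : ℝ) * (((t : ℝ) + (u : ℝ) * Real.sqrt N) / 2))
    (h₂ : ∃ a b : ℚ, ((a : ℝ) + (b : ℝ) * Real.sqrt N) ^ 2 =
      (κ₂ : ℝ) * (((t : ℝ) + (u : ℝ) * Real.sqrt N) / 2)) :
    κ₁ ≠ (N : ℤ) ∧ κ₂ ≠ (N : ℤ) ∧ κ₁ ≠ κ₂ ∧
      κ₁ * κ₂ = (Int.gcd κ₁ κ₂ : ℤ) ^ 2 * (N : ℤ) := by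
  lift κ₁ to ℕ using by omega
  lift κ₂ to ℕ using by omega
  rw [Int.squarefree_natCast] at hsf₁ hsf₂
  have hirr := irrational_sqrt_natCast_of_squarefree hsf (by omega)
  have ht : t + 2 ≠ 0 ∧ t - 2 ≠ 0 := by
    constructor <;> intro h <;> nlinarith [mul_pos (by omega : (0 : ℤ) < N) (mul_pos hu hu)]
  have hsame {v : ℤ} (hv : v ≠ 0) (h₁ : IsSquare ((κ₁ : ℤ) * v))
      (h₂ : IsSquare ((κ₂ : ℤ) * v)) : False :=
    hne <| congrArg _ <| Nat.eq_of_isSquare_mul hsf₁ hsf₂ <| Int.isSquare_natCast_iff.mp <| by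
      exact_mod_cast Int.isSquare_mul_of_isSquare_mul_of_isSquare_mul hv h₁ h₂
  have hN : IsSquare (κ₁ * κ₂ * N) := by
    rw [← Int.isSquare_natCast_iff]
    push_cast
    rcases isSquare_mul_add_two_or_sub_two hirr hnorm h₁ with h₁ | h₁ <;>
      rcases isSquare_mul_add_two_or_sub_two hirr hnorm h₂ with h₂ | h₂
    · exact (hsame ht.1 h₁ h₂).elim
    · exact Int.isSquare_mul_mul_of_sq_sub_mul_sq_eq_four hu.ne' hnorm h₁ h₂
    · simpa only [mul_comm (κ₂ : ℤ)] using
        Int.isSquare_mul_mul_of_sq_sub_mul_sq_eq_four hu.ne' hnorm h₂ h₁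
    · exact (hsame ht.2 h₁ h₂).elim
  have hprod := Nat.mul_eq_gcd_sq_mul_of_isSquare hsf₁ hsf₂ hsf hN
  refine ⟨?_, ?_, hne, by exact_mod_cast hprod⟩
  · exact_mod_cast Nat.ne_of_mul_eq_gcd_sq_mul hsf₂ (by omega) hsf.ne_zero hprod
  · rw [mul_comm, Nat.gcd_comm] at hprod
    exact_mod_cast Nat.ne_of_mul_eq_gcd_sq_mul hsf₁ (by omega) hsf.ne_zero hprod

/-- If the fundamental unit ε_N = (t + u√N)/2 of ℚ(√N) has norm 1 and
κ₁ ≠ κ₂ are square-free integers ≥ 2 with √(κᵢ·ε_N) ∈ ℚ(√N), then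
N, κ₁, κ₂ are pairwise distinct and κ₁κ₂ = gcd(κ₁,κ₂)²·N. -/
theorem stmt_10 (N : ℕ) (hN : 2 ≤ N) (hsf : Squarefree N) (t u : ℤ)
    (ht : 0 < t) (hu : 0 < u)
    (hnorm : t ^ 2 - (N : ℤ) * u ^ 2 = 4)
    (hεint : IsIntegral ℤ (((t : ℝ) + (u : ℝ) * Real.sqrt N) / 2))
    (hε1 : 1 < ((t : ℝ) + (u : ℝ) * Real.sqrt N) / 2)
    (hmin : ∀ x : ℝ, IsIntegral ℤ x → IsIntegral ℤ x⁻¹ →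
      (∃ a b : ℚ, x = (a : ℝ) + (b : ℝ) * Real.sqrt N) → 1 < x →
      ((t : ℝ) + (u : ℝ) * Real.sqrt N) / 2 ≤ x)
    (κ₁ κ₂ : ℤ) (hκ₁ : 2 ≤ κ₁) (hκ₂ : 2 ≤ κ₂)
    (hsf₁ : Squarefree κ₁) (hsf₂ : Squarefree κ₂) (hne : κ₁ ≠ κ₂)
    (h₁ : ∃ a b : ℚ, ((a : ℝ) + (b : ℝ) * Real.sqrt N) ^ 2 =
      (κ₁ : ℝ) * (((t : ℝ) + (u : ℝ) * Real.sqrt N) / 2))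
    (h₂ : ∃ a b : ℚ, ((a : ℝ) + (b : ℝ) * Real.sqrt N) ^ 2 =
      (κ₂ : ℝ) * (((t : ℝ) + (u : ℝ) * Real.sqrt N) / 2)) :
    κ₁ ≠ (N : ℤ) ∧ κ₂ ≠ (N : ℤ) ∧ κ₁ ≠ κ₂ ∧
      κ₁ * κ₂ = (Int.gcd κ₁ κ₂ : ℤ) ^ 2 * (N : ℤ) :=
  stmt_10_general N hN hsf t u hu hnorm κ₁ κ₂ hκ₁ hκ₂ hsf₁ hsf₂ hne h₁ h₂
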